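/- arXiv:2211.16067 — 2 statements merged into one kernel-verified Lean document; each statement's English description precedes it below -/
import Mathlib

section
/- Let p be a prime with p ≥ 5. Then there exist a, b ∈ ℚ_p with a·b = p such that for every nonzero u ∈ ℚ_p, it is not the case that both u^(p−1)·a and u^(1−p)·b lie in ℤ_p (i.e. have p-adic norm ≤ 1). Consequently, the restriction map from the set {(a,b) ∈ ℤ_p² : ab = p} modulo the equivalence (a,b) ∼ (c,d) ⟺ ∃ u ∈ ℤ_pˣ with c = u^(p−1)a and d = u^(1−p)b, to the set {(a,b) ∈ ℚ_p² : ab = p} modulo the analogous equivalence with u ∈ ℚ_pˣ, is not surjective. -/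
/-!
Take the pair `(p², p⁻¹)`. Twisting by `u` shifts the valuations `2` and `-1` of its entries by
`(p - 1) v(u)` and `-(p - 1) v(u)`, so both twisted entries are integral only if
`(p - 1) v(u) ∈ {-2, -1}`, which is impossible once `p - 1 ≥ 3`. A class in the image of the
restriction map, on the other hand, has a representative that becomes integral after a twist.
-/

/-- Oort–Tate pairs over a commutative ring `A` (for the prime `p`):
pairs `(a, b) ∈ A²` with `a·b = p`. -/
def OortTatePair (A : Type*) [CommRing A] (p : ℕ) : Type _ :=
  {x : A × A // x.1 * x.2 = (p : A)}

/-- The Oort–Tate equivalence: `(a,b) ∼ (c,d)` iff there is a unit `u` with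
`c = u^(p−1)·a` and `d = u^(1−p)·b`. -/
def OortTateRel (A : Type*) [CommRing A] (p : ℕ) (x y : OortTatePair A p) : Prop :=
  ∃ u : Aˣ, y.val.1 = (↑(u ^ ((p : ℤ) - 1)) : A) * x.val.1 ∧
            y.val.2 = (↑(u ^ ((1 : ℤ) - (p : ℤ))) : A) * x.val.2

theorem OortTateRel.iseqv (A : Type*) [CommRing A] (p : ℕ) :
    Equivalence (OortTateRel A p) := by
  have key : ∀ (u : Aˣ) (e : ℤ) (a : A), (↑(u⁻¹ ^ e) : A) * ((↑(u ^ e) : A) * a) = a := by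
    intro u e a
    rw [← mul_assoc, ← Units.val_mul, ← mul_zpow, inv_mul_cancel, one_zpow,
      Units.val_one, one_mul]
  constructor
  · intro x
    exact ⟨1, by simp, by simp⟩
  · rintro x y ⟨u, h1, h2⟩
    exact ⟨u⁻¹, by rw [h1, key], by rw [h2, key]⟩
  · rintro x y z ⟨u, h1, h2⟩ ⟨v, h3, h4⟩
    refine ⟨v * u, ?_, ?_⟩ <;>
      · rw [mul_zpow, Units.val_mul, mul_assoc]
        first
        | rw [h3, h1]
        | rw [h4, h2]

/-- The setoid of Oort–Tate pairs. -/
def OortTateSetoid (A : Type*) [CommRing A] (p : ℕ) : Setoid (OortTatePair A p) :=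
  ⟨OortTateRel A p, OortTateRel.iseqv A p⟩

/-- Isomorphism classes of group schemes of order `p` over `A` à la Oort–Tate:
pairs `(a,b)` with `a·b = p`, modulo the Oort–Tate equivalence. -/
def OortTateClasses (A : Type*) [CommRing A] (p : ℕ) : Type _ :=
  Quotient (OortTateSetoid A p)

/-- The restriction map `φ` from Oort–Tate classes over `ℤ_p` to Oort–Tate classes
over `ℚ_p`, induced by the inclusion `ℤ_p ⊆ ℚ_p`. -/
noncomputable def oortTateRestriction (p : ℕ) [Fact p.Prime] :
    OortTateClasses ℤ_[p] p → OortTateClasses ℚ_[p] p :=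
  Quotient.map
    (fun x => ⟨((x.val.1 : ℚ_[p]), (x.val.2 : ℚ_[p])), by
      rw [← PadicInt.coe_mul, x.property, PadicInt.coe_natCast]⟩)
    (by
      rintro x y ⟨u, h1, h2⟩
      refine ⟨Units.map (PadicInt.Coe.ringHom (p := p)).toMonoidHom u, ?_, ?_⟩
      · show ((y.val.1 : ℚ_[p])) = _
        rw [← map_zpow, Units.coe_map, h1, PadicInt.coe_mul]
        rfl
      · show ((y.val.2 : ℚ_[p])) = _
        rw [← map_zpow, Units.coe_map, h2, PadicInt.coe_mul]
        rfl)

theorem Int.mul_notMem_Icc_neg_two_neg_one {n : ℤ} (hn : 3 ≤ n) (v : ℤ) :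
    n * v ∉ Set.Icc (-2) (-1) := by
  rintro ⟨hlo, hhi⟩
  rcases le_or_gt 0 v with hv | hv <;> nlinarith

namespace Padic

variable {p : ℕ} [Fact p.Prime]

theorem norm_zpow_mul_le_one_iff {u a : ℚ_[p]} (hu : u ≠ 0) (ha : a ≠ 0) (n : ℤ) :
    ‖u ^ n * a‖ ≤ 1 ↔ 0 ≤ n * u.valuation + a.valuation := by
  rw [norm_le_one_iff_val_nonneg, valuation_mul (zpow_ne_zero n hu) ha, valuation_zpow]

theorem not_norm_zpow_mul_p_sq_le_one_and {u : ℚ_[p]} (hu : u ≠ 0) {n : ℤ} (hn : 3 ≤ n) :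
    ¬(‖u ^ n * (p : ℚ_[p]) ^ 2‖ ≤ 1 ∧ ‖u ^ (-n) * (p : ℚ_[p])⁻¹‖ ≤ 1) := by
  have hp : (p : ℚ_[p]) ≠ 0 := Nat.cast_ne_zero.mpr (Fact.out : p.Prime).ne_zero
  rw [norm_zpow_mul_le_one_iff hu (pow_ne_zero 2 hp),
    norm_zpow_mul_le_one_iff hu (inv_ne_zero hp), valuation_pow, valuation_inv, valuation_p]
  rintro ⟨h₁, h₂⟩
  push_cast at h₁
  exact Int.mul_notMem_Icc_neg_two_neg_one hn u.valuation ⟨by linarith, by linarith⟩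

end Padic

theorem exists_integral_twist_of_mem_range_oortTateRestriction {p : ℕ} [Fact p.Prime]
    {y : OortTatePair ℚ_[p] p}
    (hy : Quotient.mk (OortTateSetoid ℚ_[p] p) y ∈ Set.range (oortTateRestriction p)) :
    ∃ u : ℚ_[p], u ≠ 0 ∧
      ‖u ^ ((p : ℤ) - 1) * y.val.1‖ ≤ 1 ∧ ‖u ^ ((1 : ℤ) - (p : ℤ)) * y.val.2‖ ≤ 1 := by
  obtain ⟨c, hc⟩ := hy
  induction c using Quotient.inductionOn with
  | h x =>
    obtain ⟨u, h₁, h₂⟩ := Quotient.exact hc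
    have untwist (e : ℤ) (z : ℚ_[p]) : (u : ℚ_[p])⁻¹ ^ e * ((u ^ e : ℚ_[p]ˣ) * z) = z := by
      rw [Units.val_zpow_eq_zpow_val, inv_zpow,
        inv_mul_cancel_left₀ (zpow_ne_zero e u.ne_zero)]
    refine ⟨(u : ℚ_[p])⁻¹, inv_ne_zero u.ne_zero, ?_, ?_⟩
    · rw [h₁, untwist]
      exact x.val.1.norm_le_one
    · rw [h₂, untwist]
      exact x.val.2.norm_le_one

/-- **Counter-example 3.8.**
For a prime `p ≥ 5`, there exist `a, b ∈ ℚ_p` with `a·b = p` such that for every nonzero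
`u ∈ ℚ_p` not both `u^(p−1)·a` and `u^(1−p)·b` lie in `ℤ_p` (have `p`-adic norm `≤ 1`).
Consequently, the restriction map from Oort–Tate classes over `ℤ_p` to Oort–Tate classes
over `ℚ_p` is not surjective: some group scheme of order `p` over `ℚ_p` has no finite flat
model over `ℤ_p`. -/
theorem oortTateRestriction_not_surjective (p : ℕ) [Fact p.Prime] (hp : 5 ≤ p) :
    (∃ a b : ℚ_[p], a * b = (p : ℚ_[p]) ∧
      ∀ u : ℚ_[p], u ≠ 0 →
        ¬(‖u ^ ((p : ℤ) - 1) * a‖ ≤ 1 ∧ ‖u ^ ((1 : ℤ) - (p : ℤ)) * b‖ ≤ 1)) ∧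
    ¬ Function.Surjective (oortTateRestriction p) := by
  have hab : (p : ℚ_[p]) ^ 2 * (p : ℚ_[p])⁻¹ = p := by
    rw [sq, mul_inv_cancel_right₀ (Nat.cast_ne_zero.mpr (Fact.out : p.Prime).ne_zero)]
  have no_twist (u : ℚ_[p]) (hu : u ≠ 0) :
      ¬(‖u ^ ((p : ℤ) - 1) * (p : ℚ_[p]) ^ 2‖ ≤ 1 ∧
        ‖u ^ ((1 : ℤ) - (p : ℤ)) * (p : ℚ_[p])⁻¹‖ ≤ 1) := by
    simpa only [neg_sub] using
      Padic.not_norm_zpow_mul_p_sq_le_one_and hu (n := (p : ℤ) - 1) (by omega)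
  refine ⟨⟨_, _, hab, no_twist⟩, fun hsurj => ?_⟩
  obtain ⟨u, hu, h⟩ := exists_integral_twist_of_mem_range_oortTateRestriction
    (hsurj (Quotient.mk _ ⟨(_, _), hab⟩))
  exact no_twist u hu h
end

section
/- Let A be a discrete valuation ring that is not a field, let π ∈ A be a uniformizer, let n be a positive integer whose image in A is invertible, and suppose A contains a primitive n-th root of unity ζ (i.e. there is ζ ∈ A with IsPrimitiveRoot ζ n). Then the group of A-algebra automorphisms of B = A[X]/(Xⁿ − π) is isomorphic to ℤ/nℤ; each automorphism is determined by sending the class x of X to ζᵏ·x for a unique k ∈ ℤ/nℤ. -/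
/-!
An `A`-automorphism `σ` of `B = A[X]/(Xⁿ - π)` is determined by `σ x`, which is again an `n`-th
root of `π`. Since `Xⁿ - π` is Eisenstein at `π`, it is prime in the factorial ring `A[X]`, so `B`
is a domain; there the `n`-th roots of `π` are exactly the `n` distinct elements `ζᵏ x`, and each
of them defines an automorphism `x ↦ ζᵏ x`, with `k ↦ (x ↦ ζᵏ x)` a homomorphism on `ℤ/nℤ`.
-/

open Polynomial

namespace Polynomial

variable {A : Type*} [CommRing A] [IsDomain A] {π : A} {n : ℕ}

theorem isEisensteinAt_X_pow_sub_C (hπ : Prime π) (hn : n ≠ 0) :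
    (X ^ n - C π).IsEisensteinAt (Ideal.span {π}) := by
  refine (monic_X_pow_sub_C π hn).isEisensteinAt_of_mem_of_notMem ?_ (fun {i} hi ↦ ?_) ?_
  · rw [Ne, Ideal.span_singleton_eq_top]
    exact hπ.not_isUnit
  · rw [natDegree_X_pow_sub_C] at hi
    rw [coeff_sub, coeff_X_pow, if_neg hi.ne, coeff_C, zero_sub, Ideal.neg_mem_iff]
    split_ifs
    · exact Ideal.mem_span_singleton_self π
    · exact Ideal.zero_mem _
  · rw [coeff_sub, coeff_X_pow, if_neg hn.symm, coeff_C_zero, zero_sub, Ideal.neg_mem_iff,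
      Ideal.span_singleton_pow, Ideal.mem_span_singleton, pow_two]
    intro h
    exact hπ.not_dvd_one ((mul_dvd_mul_iff_left hπ.ne_zero).mp (by rwa [mul_one]))

theorem irreducible_X_pow_sub_C_of_prime (hπ : Prime π) (hn : n ≠ 0) :
    Irreducible (X ^ n - C π) :=
  (isEisensteinAt_X_pow_sub_C hπ hn).irreducible ((Ideal.span_singleton_prime hπ.ne_zero).mpr hπ)
    (monic_X_pow_sub_C π hn).isPrimitive (by rwa [natDegree_X_pow_sub_C, pos_iff_ne_zero])

end Polynomial

theorem pow_val_add_of_pow_eq_one {M : Type*} [Monoid M] {n : ℕ} [NeZero n] {ζ : M}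
    (hζ : ζ ^ n = 1) (k l : ZMod n) : ζ ^ (k + l).val = ζ ^ k.val * ζ ^ l.val := by
  rw [ZMod.val_add, ← pow_eq_pow_mod _ hζ, pow_add]

namespace AdjoinRoot

variable {A : Type*} [CommRing A] {n : ℕ} {a ζ : A}

theorem root_X_pow_sub_C_pow (n : ℕ) (a : A) :
    root (X ^ n - C a) ^ n = algebraMap A (AdjoinRoot (X ^ n - C a)) a := by
  rw [← sub_eq_zero, ← eval₂_root (X ^ n - C a), eval₂_sub, eval₂_C, eval₂_pow, eval₂_X,
    algebraMap_eq]

theorem eval₂_algebraMap_pow_mul_root (hζ : ζ ^ n = 1) (k : ℕ) :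
    (X ^ n - C a).eval₂ (Algebra.ofId A (AdjoinRoot (X ^ n - C a)))
      (algebraMap A _ (ζ ^ k) * root (X ^ n - C a)) = 0 := by
  rw [eval₂_sub, eval₂_X_pow, eval₂_C, mul_pow, ← map_pow, ← pow_mul, mul_comm k, pow_mul, hζ,
    one_pow, map_one, one_mul, root_X_pow_sub_C_pow, Algebra.toRingHom_ofId, sub_self]

variable [NeZero n]

theorem root_X_pow_sub_C_ne_zero_of_injective
    (hinj : Function.Injective (algebraMap A (AdjoinRoot (X ^ n - C a)))) (ha : a ≠ 0) :
    root (X ^ n - C a) ≠ 0 := fun h ↦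
  ha (hinj (by rw [map_zero, ← root_X_pow_sub_C_pow, h, zero_pow (NeZero.ne n)]))

noncomputable def mulRootPowAlgHom (hζ : ζ ^ n = 1) :
    Multiplicative (ZMod n) →* (AdjoinRoot (X ^ n - C a) →ₐ[A] AdjoinRoot (X ^ n - C a)) where
  toFun k := liftAlgHom _ (Algebra.ofId _ _) _ (eval₂_algebraMap_pow_mul_root hζ k.toAdd.val)
  map_one' := algHom_ext (by simp)
  map_mul' k l := algHom_ext <| by
    simp only [AlgHom.mul_apply, liftAlgHom_root, map_mul, liftAlgHom_of, Algebra.ofId_apply,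
      algebraMap_eq, toAdd_mul, pow_val_add_of_pow_eq_one hζ, map_pow]
    ring

noncomputable def mulRootPowAut (hζ : ζ ^ n = 1) :
    Multiplicative (ZMod n) →* (AdjoinRoot (X ^ n - C a) ≃ₐ[A] AdjoinRoot (X ^ n - C a)) :=
  (AlgEquiv.algHomUnitsEquiv _ _).toMonoidHom.comp (mulRootPowAlgHom hζ).toHomUnits

theorem mulRootPowAut_apply_root (hζ : ζ ^ n = 1) (k : ZMod n) :
    mulRootPowAut (a := a) hζ (.ofAdd k) (root _) = algebraMap A _ ζ ^ k.val * root _ := by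
  rw [← map_pow]
  exact liftAlgHom_root _ (Algebra.ofId _ _) _ (eval₂_algebraMap_pow_mul_root hζ k.val)

theorem mulRootPowAut_eq_iff (hζ : ζ ^ n = 1) (k : ZMod n)
    (σ : AdjoinRoot (X ^ n - C a) ≃ₐ[A] AdjoinRoot (X ^ n - C a)) :
    mulRootPowAut hζ (.ofAdd k) = σ ↔ σ (root _) = algebraMap A _ ζ ^ k.val * root _ := by
  rw [← mulRootPowAut_apply_root hζ, eq_comm (a := σ _)]
  exact ⟨fun h ↦ h ▸ rfl, fun h ↦ AlgEquiv.coe_toAlgHom_injective (algHom_ext h)⟩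

section IsDomain

variable [IsDomain (AdjoinRoot (X ^ n - C a))] (hζ : IsPrimitiveRoot ζ n)
  (hinj : Function.Injective (algebraMap A (AdjoinRoot (X ^ n - C a)))) (ha : a ≠ 0)
include hζ hinj ha

theorem pow_val_mul_root_injective :
    Function.Injective fun k : ZMod n ↦ algebraMap A (AdjoinRoot (X ^ n - C a)) ζ ^ k.val * root _ :=
  fun k l h ↦ ZMod.val_injective n <| (hζ.map_of_injective hinj).injOn_pow_mul
    (root_X_pow_sub_C_ne_zero_of_injective hinj ha) (by simpa using k.val_lt)
    (by simpa using l.val_lt) h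

theorem existsUnique_apply_root_eq (σ : AdjoinRoot (X ^ n - C a) ≃ₐ[A] AdjoinRoot (X ^ n - C a)) :
    ∃! k : ZMod n, σ (root _) = algebraMap A _ ζ ^ k.val * root _ := by
  have hσ : σ (root _) ∈ nthRoots n (algebraMap A (AdjoinRoot (X ^ n - C a)) a) := by
    rw [mem_nthRoots (NeZero.pos n), ← map_pow, root_X_pow_sub_C_pow, σ.commutes]
  rw [(hζ.map_of_injective hinj).nthRoots_eq (root_X_pow_sub_C_pow n a), Multiset.mem_map] at hσ
  obtain ⟨i, hi, hσ⟩ := hσ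
  have hσi : σ (root _) = algebraMap A _ ζ ^ (i : ZMod n).val * root _ := by
    rw [ZMod.val_natCast_of_lt (Multiset.mem_range.mp hi), hσ]
  exact ⟨i, hσi, fun k hk ↦ pow_val_mul_root_injective hζ hinj ha (hk.symm.trans hσi)⟩

theorem mulRootPowAut_bijective : Function.Bijective (mulRootPowAut (a := a) hζ.pow_eq_one) := by
  refine (Function.bijective_iff_existsUnique _).mpr fun σ ↦ ?_
  obtain ⟨k, hk, hk_unique⟩ := existsUnique_apply_root_eq hζ hinj ha σ
  exact ⟨.ofAdd k, (mulRootPowAut_eq_iff _ k σ).mpr hk,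
    fun l hl ↦ hk_unique l.toAdd ((mulRootPowAut_eq_iff _ l.toAdd σ).mp hl)⟩

end IsDomain

end AdjoinRoot

theorem aut_adjoinRoot_nthRoot_uniformizer_general
    (A : Type*) [CommRing A] [IsDomain A] [IsDiscreteValuationRing A]
    (π : A) (hπ : Irreducible π) (n : ℕ) (hn : 0 < n)
    (ζ : A) (hζ : IsPrimitiveRoot ζ n) :
    Nonempty ((AdjoinRoot (X ^ n - C π) ≃ₐ[A] AdjoinRoot (X ^ n - C π)) ≃*
        Multiplicative (ZMod n)) ∧
    ∀ σ : AdjoinRoot (X ^ n - C π) ≃ₐ[A] AdjoinRoot (X ^ n - C π),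
      ∃! k : ZMod n,
        σ (AdjoinRoot.root (X ^ n - C π)) =
          algebraMap A (AdjoinRoot (X ^ n - C π)) ζ ^ k.val *
            AdjoinRoot.root (X ^ n - C π) := by
  have : NeZero n := ⟨hn.ne'⟩
  have : IsDomain (AdjoinRoot (X ^ n - C π)) :=
    AdjoinRoot.isDomain_of_prime (irreducible_X_pow_sub_C_of_prime hπ.prime hn.ne').prime
  have hinj : Function.Injective (algebraMap A (AdjoinRoot (X ^ n - C π))) :=
    AdjoinRoot.of.injective_of_degree_ne_zero (by simp [degree_X_pow_sub_C hn, hn.ne'])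
  exact ⟨⟨(MulEquiv.ofBijective _ (AdjoinRoot.mulRootPowAut_bijective hζ hinj hπ.ne_zero)).symm⟩,
    AdjoinRoot.existsUnique_apply_root_eq hζ hinj hπ.ne_zero⟩

/-- **(Kato's example, automorphism group.)**
Let `A` be a discrete valuation ring, `π ∈ A` a uniformizer, `n` a positive integer whose
image in `A` is invertible, and suppose `A` contains a primitive `n`-th root of unity `ζ`.
Then the group of `A`-algebra automorphisms of `B = A[X]/(Xⁿ − π)` is isomorphic to
`ℤ/nℤ`; each automorphism is determined by sending the class `x` of `X` to `ζᵏ·x` for a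
unique `k ∈ ℤ/nℤ`. -/
theorem aut_adjoinRoot_nthRoot_uniformizer
    (A : Type*) [CommRing A] [IsDomain A] [IsDiscreteValuationRing A]
    (π : A) (hπ : Irreducible π) (n : ℕ) (hn : 0 < n) (hinv : IsUnit (n : A))
    (ζ : A) (hζ : IsPrimitiveRoot ζ n) :
    Nonempty ((AdjoinRoot (X ^ n - C π) ≃ₐ[A] AdjoinRoot (X ^ n - C π)) ≃*
        Multiplicative (ZMod n)) ∧
    ∀ σ : AdjoinRoot (X ^ n - C π) ≃ₐ[A] AdjoinRoot (X ^ n - C π),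
      ∃! k : ZMod n,
        σ (AdjoinRoot.root (X ^ n - C π)) =
          algebraMap A (AdjoinRoot (X ^ n - C π)) ζ ^ k.val *
            AdjoinRoot.root (X ^ n - C π) :=
  aut_adjoinRoot_nthRoot_uniformizer_general A π hπ n hn ζ hζ
end
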